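/- Let K ≥ 2 and let μ ∈ (0,1)^K satisfy μ_1 > μ_a for all a ≥ 2. Then the maximum over Σ_K of the objective G(w) = min_{a≠1} (w_1+w_a)·I_{w_1/(w_1+w_a)}(μ_1,μ_a) is strictly positive, and every maximizer w* ∈ Σ_K satisfies w*_a > 0 for every a ∈ {1,…,K}. -/
import Mathlib


/-- Bernoulli Kullback–Leibler divergence. -/
noncomputable def kl (x y : ℝ) : ℝ :=
  x * Real.log (x / y) + (1 - x) * Real.log ((1 - x) / (1 - y))

/-- The parameterized Jensen–Shannon-type divergence `I_α`. -/
noncomputable def Ialpha (α x y : ℝ) : ℝ :=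
  α * kl x (α * x + (1 - α) * y) + (1 - α) * kl y (α * x + (1 - α) * y)

/-- The probability simplex on `Fin K`. -/
def simplex (K : ℕ) : Set (Fin K → ℝ) :=
  {w | (∀ a, 0 ≤ w a) ∧ ∑ a, w a = 1}

lemma erase_zero_nonempty (K : ℕ) :
    ((Finset.univ : Finset (Fin (K + 2))).erase 0).Nonempty :=
  ⟨1, Finset.mem_erase.mpr ⟨by simp [Fin.ext_iff], Finset.mem_univ _⟩⟩

/-- The objective `G(w) = min_{a ≠ 1} (w₁+wₐ)·I_{w₁/(w₁+wₐ)}(μ₁,μₐ)`, with the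
convention that the `a`-th term is `0` when `w₁ + wₐ = 0`. -/
noncomputable def G (K : ℕ) (μ : Fin (K + 2) → ℝ) (w : Fin (K + 2) → ℝ) : ℝ :=
  ((Finset.univ : Finset (Fin (K + 2))).erase 0).inf' (erase_zero_nonempty K)
    (fun a => if w 0 + w a = 0 then 0
      else (w 0 + w a) * Ialpha (w 0 / (w 0 + w a)) (μ 0) (μ a))

lemma log_div_self' (t : ℝ) : Real.log (t / t) = 0 := by
  rcases eq_or_ne t 0 with h | h
  · simp [h]
  · simp [div_self h]

lemma kl_self (x : ℝ) : kl x x = 0 := by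
  simp [kl, log_div_self']

lemma kl_term_ge (p q : ℝ) (hp : 0 < p) (hq : 0 < q) :
    p - q ≤ p * Real.log (p / q) := by
  have h := Real.log_le_sub_one_of_pos (div_pos hq hp)
  have h2 : Real.log (p / q) = - Real.log (q / p) := by
    rw [← Real.log_inv, inv_div]
  have h3 : q / p * p = q := div_mul_cancel₀ q hp.ne'
  rw [h2]
  nlinarith

lemma kl_term_gt (p q : ℝ) (hp : 0 < p) (hq : 0 < q) (hne : p ≠ q) :
    p - q < p * Real.log (p / q) := by
  have hne' : q / p ≠ 1 := by
    intro h; exact hne ((div_eq_one_iff_eq hp.ne').mp h).symm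
  have h := Real.log_lt_sub_one_of_pos (div_pos hq hp) hne'
  have h2 : Real.log (p / q) = - Real.log (q / p) := by
    rw [← Real.log_inv, inv_div]
  have h3 : q / p * p = q := div_mul_cancel₀ q hp.ne'
  rw [h2]
  nlinarith

lemma kl_nonneg' {p q : ℝ} (hp : p ∈ Set.Ioo (0:ℝ) 1) (hq : q ∈ Set.Ioo (0:ℝ) 1) :
    0 ≤ kl p q := by
  have h1 := kl_term_ge p q hp.1 hq.1
  have h2 := kl_term_ge (1-p) (1-q) (by linarith [hp.2]) (by linarith [hq.2])
  unfold kl; linarith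

lemma kl_pos' {p q : ℝ} (hp : p ∈ Set.Ioo (0:ℝ) 1) (hq : q ∈ Set.Ioo (0:ℝ) 1)
    (hne : p ≠ q) : 0 < kl p q := by
  have h1 := kl_term_gt p q hp.1 hq.1 hne
  have h2 := kl_term_ge (1-p) (1-q) (by linarith [hp.2]) (by linarith [hq.2])
  unfold kl; linarith

lemma kl_le_bound {p q : ℝ} (hp : p ∈ Set.Ioo (0:ℝ) 1) (hq : q ∈ Set.Ioo (0:ℝ) 1) :
    kl p q ≤ -Real.log q - Real.log (1 - q) := by
  obtain ⟨hp1, hp2⟩ := hp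
  obtain ⟨hq1, hq2⟩ := hq
  unfold kl
  rw [Real.log_div hp1.ne' hq1.ne',
    Real.log_div (by linarith [hp2] : (1:ℝ) - p ≠ 0) (by linarith [hq2] : (1:ℝ) - q ≠ 0)]
  have l1 : 0 ≤ p * (-Real.log p) :=
    mul_nonneg hp1.le (by linarith [Real.log_nonpos hp1.le hp2.le])
  have l2 : 0 ≤ (1-p) * (-Real.log (1-p)) :=
    mul_nonneg (by linarith [hp2]) (by linarith [Real.log_nonpos (by linarith [hp1] : (0:ℝ) ≤ 1 - p) (by linarith [hp1])])
  have l3 : 0 ≤ (1-p) * (-Real.log q) :=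
    mul_nonneg (by linarith [hp2]) (by linarith [Real.log_nonpos hq1.le hq2.le])
  have l4 : 0 ≤ p * (-Real.log (1-q)) :=
    mul_nonneg hp1.le (by linarith [Real.log_nonpos (by linarith [hq1] : (0:ℝ) ≤ 1 - q) (by linarith [hq1])])
  nlinarith

lemma Ialpha_zero (x y : ℝ) : Ialpha 0 x y = 0 := by
  simp [Ialpha, kl_self]

lemma Ialpha_one (x y : ℝ) : Ialpha 1 x y = 0 := by
  simp [Ialpha, kl_self]

lemma Ialpha_bounds {α x y : ℝ} (hα0 : 0 ≤ α) (hα1 : α ≤ 1)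
    (hx : x ∈ Set.Ioo (0:ℝ) 1) (hy : y ∈ Set.Ioo (0:ℝ) 1) (hyx : y ≤ x) :
    0 ≤ Ialpha α x y ∧ Ialpha α x y ≤ -Real.log y - Real.log (1 - x) := by
  obtain ⟨hx1, hx2⟩ := hx
  obtain ⟨hy1, hy2⟩ := hy
  set m := α * x + (1 - α) * y with hm
  have hym : y ≤ m := by nlinarith
  have hmx : m ≤ x := by nlinarith
  have hmIoo : m ∈ Set.Ioo (0:ℝ) 1 := ⟨by linarith, by linarith⟩
  have hk1 : 0 ≤ kl x m := kl_nonneg' ⟨hx1, hx2⟩ hmIoo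
  have hk2 : 0 ≤ kl y m := kl_nonneg' ⟨hy1, hy2⟩ hmIoo
  have hb1 : kl x m ≤ -Real.log y - Real.log (1 - x) := by
    have := kl_le_bound ⟨hx1, hx2⟩ hmIoo
    have h1 : Real.log y ≤ Real.log m := Real.log_le_log hy1 hym
    have h2 : Real.log (1 - x) ≤ Real.log (1 - m) := Real.log_le_log (by linarith) (by linarith)
    linarith
  have hb2 : kl y m ≤ -Real.log y - Real.log (1 - x) := by
    have := kl_le_bound ⟨hy1, hy2⟩ hmIoo
    have h1 : Real.log y ≤ Real.log m := Real.log_le_log hy1 hym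
    have h2 : Real.log (1 - x) ≤ Real.log (1 - m) := Real.log_le_log (by linarith) (by linarith)
    linarith
  constructor
  · have := mul_nonneg hα0 hk1
    have := mul_nonneg (by linarith : (0:ℝ) ≤ 1 - α) hk2
    unfold Ialpha; rw [← hm]; linarith
  · have t1 : α * kl x m ≤ α * (-Real.log y - Real.log (1 - x)) :=
      mul_le_mul_of_nonneg_left hb1 hα0
    have t2 : (1 - α) * kl y m ≤ (1 - α) * (-Real.log y - Real.log (1 - x)) :=
      mul_le_mul_of_nonneg_left hb2 (by linarith)
    unfold Ialpha; rw [← hm]; nlinarith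

lemma Ialpha_half_pos {x y : ℝ} (hx : x ∈ Set.Ioo (0:ℝ) 1) (hy : y ∈ Set.Ioo (0:ℝ) 1)
    (hyx : y < x) : 0 < Ialpha (1/2) x y := by
  obtain ⟨hx1, hx2⟩ := hx
  obtain ⟨hy1, hy2⟩ := hy
  have hmIoo : (1/2 : ℝ) * x + (1 - 1/2) * y ∈ Set.Ioo (0:ℝ) 1 := ⟨by linarith, by linarith⟩
  have hne : x ≠ (1/2 : ℝ) * x + (1 - 1/2) * y := by intro h; nlinarith [h]
  have hk1 : 0 < kl x ((1/2:ℝ) * x + (1 - 1/2) * y) := kl_pos' ⟨hx1, hx2⟩ hmIoo hne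
  have hk2 : 0 ≤ kl y ((1/2:ℝ) * x + (1 - 1/2) * y) := kl_nonneg' ⟨hy1, hy2⟩ hmIoo
  unfold Ialpha
  nlinarith

/-- the maximum of `G` over the simplex is positive, and every maximizer
has all coordinates positive. -/
theorem maximizer_positive (K : ℕ) (μ : Fin (K + 2) → ℝ)
    (hμ : ∀ a, μ a ∈ Set.Ioo (0 : ℝ) 1)
    (hbest : ∀ a : Fin (K + 2), a ≠ 0 → μ a < μ 0) :
    (0 < ⨆ w : simplex (K + 2), G K μ (w : Fin (K + 2) → ℝ)) ∧
    ∀ wstar ∈ simplex (K + 2),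
      (∀ w ∈ simplex (K + 2), G K μ w ≤ G K μ wstar) → ∀ a, 0 < wstar a := by
  have h01 : (0 : Fin (K+2)) ≠ 1 := by simp [Fin.ext_iff]
  have h1mem : (1 : Fin (K+2)) ∈ (Finset.univ : Finset (Fin (K+2))).erase 0 :=
    Finset.mem_erase.mpr ⟨h01.symm, Finset.mem_univ _⟩
  -- uniform point
  set c : ℝ := ((K:ℝ) + 2)⁻¹ with hc
  have hcpos : 0 < c := by positivity
  set u : Fin (K+2) → ℝ := fun _ => c with hu
  have husimplex : u ∈ simplex (K+2) := by
    refine ⟨fun a => hcpos.le, ?_⟩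
    simp [hu, Finset.sum_const, Finset.card_univ, hc]
    field_simp
  have huG : 0 < G K μ u := by
    rw [G, Finset.lt_inf'_iff]
    intro a ha
    have ha0 : a ≠ 0 := (Finset.mem_erase.mp ha).1
    have hsum : u 0 + u a = c + c := rfl
    have hsumpos : (0:ℝ) < c + c := by linarith
    rw [hsum, if_neg hsumpos.ne']
    have hhalf : c / (c + c) = 1/2 := by
      rw [div_eq_div_iff hsumpos.ne' (two_ne_zero)]; ring
    have : u 0 / (u 0 + u a) = 1/2 := by rw [hsum] at *; exact hhalf
    rw [this]
    exact mul_pos hsumpos (Ialpha_half_pos (hμ 0) (hμ a) (hbest a ha0))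
  -- upper bound
  set C : ℝ := -Real.log (μ 1) - Real.log (1 - μ 0) with hCdef
  have hCpos : 0 < C := by
    have h1 := Real.log_neg (hμ 1).1 (hμ 1).2
    have h2 := Real.log_neg (by linarith [(hμ 0).2] : (0:ℝ) < 1 - μ 0)
      (by linarith [(hμ 0).1] : 1 - μ 0 < 1)
    simp only [hCdef]; linarith
  have hub : ∀ w ∈ simplex (K+2), G K μ w ≤ C := by
    intro w hw
    have hle : G K μ w ≤ (if w 0 + w 1 = 0 then 0
        else (w 0 + w 1) * Ialpha (w 0 / (w 0 + w 1)) (μ 0) (μ 1)) :=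
      Finset.inf'_le _ h1mem
    refine hle.trans ?_
    split_ifs with h
    · exact hCpos.le
    · have hpos : 0 < w 0 + w 1 := lt_of_le_of_ne (by linarith [hw.1 0, hw.1 1]) (Ne.symm h)
      have hα0 : 0 ≤ w 0 / (w 0 + w 1) := div_nonneg (hw.1 0) hpos.le
      have hα1 : w 0 / (w 0 + w 1) ≤ 1 := by
        rw [div_le_one hpos]; linarith [hw.1 1]
      obtain ⟨hI0, hIC⟩ := Ialpha_bounds hα0 hα1 (hμ 0) (hμ 1) (hbest 1 h01.symm).le
      have hs1 : w 0 + w 1 ≤ 1 := by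
        have hsub : ({0, 1} : Finset (Fin (K+2))) ⊆ Finset.univ := Finset.subset_univ _
        have := Finset.sum_le_sum_of_subset_of_nonneg hsub (fun i _ _ => hw.1 i)
        rw [Finset.sum_pair h01, hw.2] at this
        exact this
      nlinarith
  have hbdd : BddAbove (Set.range fun w : simplex (K+2) => G K μ (w : Fin (K+2) → ℝ)) := by
    refine ⟨C, ?_⟩
    rintro x ⟨⟨w, hw⟩, rfl⟩
    exact hub w hw
  constructor
  · exact lt_of_lt_of_le huG (le_ciSup hbdd ⟨u, husimplex⟩)
  · intro wstar hws hmax a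
    by_contra hcon
    have ha0 : wstar a = 0 := le_antisymm (not_lt.mp hcon) (hws.1 a)
    have hGpos : 0 < G K μ wstar := lt_of_lt_of_le huG (hmax u husimplex)
    have hGle : G K μ wstar ≤ 0 := by
      rcases eq_or_ne a 0 with rfl | hane
      · -- wstar 0 = 0; term at 1 vanishes
        have hle : G K μ wstar ≤ (if wstar 0 + wstar 1 = 0 then 0
            else (wstar 0 + wstar 1) * Ialpha (wstar 0 / (wstar 0 + wstar 1)) (μ 0) (μ 1)) :=
          Finset.inf'_le _ h1mem
        refine hle.trans ?_
        split_ifs with h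
        · exact le_rfl
        · rw [ha0, zero_add] at h ⊢
          rw [zero_div, Ialpha_zero, mul_zero]
      · -- wstar a = 0, a ≠ 0; term at a vanishes
        have hamem : a ∈ (Finset.univ : Finset (Fin (K+2))).erase 0 :=
          Finset.mem_erase.mpr ⟨hane, Finset.mem_univ _⟩
        have hle : G K μ wstar ≤ (if wstar 0 + wstar a = 0 then 0
            else (wstar 0 + wstar a) * Ialpha (wstar 0 / (wstar 0 + wstar a)) (μ 0) (μ a)) :=
          Finset.inf'_le _ hamem
        refine hle.trans ?_
        split_ifs with h
        · exact le_rfl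
        · rw [ha0, add_zero] at h ⊢
          rw [div_self h, Ialpha_one, mul_zero]
    linarith
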